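/- For all stoups S and contexts Γ, the rule ⊗L*⁻¹, which from a cut-free derivation of ⟦S ∣ Γ⟧ ∣ Δ ⟶ C produces a cut-free derivation of S ∣ Γ, Δ ⟶ C, is admissible; moreover ⊗L*⁻¹ is compatible with ◦≐ and inverse to the rule ⊗L* (obtained by iterated application of IL and ⊗L, turning a derivation of S ∣ Γ, Δ ⟶ C into one of ⟦S ∣ Γ⟧ ∣ Δ ⟶ C), in the sense that ⊗L*⁻¹(⊗L* f) = f and ⊗L*(⊗L*⁻¹ f) ◦≐ f. -/

import Mathlib

set_option linter.unusedVariables false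
inductive Fma (V : Type) : Type
  | var : V → Fma V
  | unit : Fma V
  | tens : Fma V → Fma V → Fma V

abbrev Stp (V : Type) := Option (Fma V)

def stpF {V : Type} : Stp V → Fma V
  | none => Fma.unit
  | some A => A

def semF {V : Type} : Fma V → List (Fma V) → Fma V
  | A, [] => A
  | A, B :: Γ => semF (A.tens B) Γ

abbrev sem {V : Type} (S : Stp V) (Γ : List (Fma V)) : Fma V := semF (stpF S) Γ

theorem semF_append {V : Type} (A : Fma V) (Γ Δ : List (Fma V)) :
    semF A (Γ ++ Δ) = semF (semF A Γ) Δ := by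
  induction Γ generalizing A with
  | nil => rfl
  | cons B Γ ih => exact ih _

/-- The cut-free skew monoidal sequent calculus. -/
inductive CF {V : Type} : Stp V → List (Fma V) → Fma V → Type
  | ax : CF (some A) [] A
  | uf : CF (some A) Γ C → CF none (A :: Γ) C
  | Il : CF none Γ C → CF (some Fma.unit) Γ C
  | Ir : CF none [] Fma.unit
  | tl : CF (some A) (B :: Γ) C → CF (some (Fma.tens A B)) Γ C
  | tr : CF S Γ A → CF none Δ B → CF S (Γ ++ Δ) (Fma.tens A B)

inductive CFEq {V : Type} : {S : Stp V} → {Γ : List (Fma V)} → {C : Fma V} → CF S Γ C → CF S Γ C → Prop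
  | refl : CFEq f f
  | symm : CFEq f g → CFEq g f
  | trans : CFEq f g → CFEq g h → CFEq f h
  | ufCong : CFEq f g → CFEq (CF.uf f) (CF.uf g)
  | IlCong : CFEq f g → CFEq (CF.Il f) (CF.Il g)
  | tlCong : CFEq f g → CFEq (CF.tl f) (CF.tl g)
  | trCong : CFEq f f' → CFEq g g' → CFEq (CF.tr f g) (CF.tr f' g')
  | axI : CFEq (CF.ax (A := Fma.unit (V := V))) (CF.Il CF.Ir)
  | axTens : CFEq (CF.ax (A := Fma.tens A B)) (CF.tl (CF.tr CF.ax (CF.uf CF.ax)))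
  | trUf : CFEq (CF.tr (CF.uf f) g) (CF.uf (CF.tr f g))
  | trIl : CFEq (CF.tr (CF.Il f) g) (CF.Il (CF.tr f g))
  | trTl : CFEq (CF.tr (CF.tl f) g) (CF.tl (CF.tr f g))

def ILinv {V : Type} {Γ : List (Fma V)} {C : Fma V} : CF (some Fma.unit) Γ C → CF none Γ C
  | .ax => .Ir
  | .Il f => f
  | .tr f g => .tr (ILinv f) g

def tensLinv {V : Type} {Γ : List (Fma V)} {A B C : Fma V} :
    CF (some (Fma.tens A B)) Γ C → CF (some A) (B :: Γ) C
  | .ax => .tr .ax (.uf .ax)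
  | .tl f => f
  | .tr f g => .tr (tensLinv f) g

def otLstarF {V : Type} {A : Fma V} {Δ : List (Fma V)} {C : Fma V} :
    (Γ : List (Fma V)) → CF (some A) (Γ ++ Δ) C → CF (some (semF A Γ)) Δ C
  | [], f => f
  | B :: Γ', f => otLstarF Γ' (.tl f)

def otLinvF {V : Type} {A : Fma V} {Δ : List (Fma V)} {C : Fma V} :
    (Γ : List (Fma V)) → CF (some (semF A Γ)) Δ C → CF (some A) (Γ ++ Δ) C
  | [], f => f
  | B :: Γ', f => tensLinv (otLinvF Γ' f)

def otLstar {V : Type} (S : Stp V) (Γ : List (Fma V)) {Δ : List (Fma V)} {C : Fma V}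
    (f : CF S (Γ ++ Δ) C) : CF (some (sem S Γ)) Δ C :=
  match S, f with
  | some _, f => otLstarF Γ f
  | none, f => otLstarF Γ (.Il f)

def otLinvstar {V : Type} (S : Stp V) (Γ : List (Fma V)) {Δ : List (Fma V)} {C : Fma V}
    (f : CF (some (sem S Γ)) Δ C) : CF S (Γ ++ Δ) C :=
  match S, f with
  | some _, f => otLinvF Γ f
  | none, f => ILinv (otLinvF Γ f)

/-!
`⊗L*` and `⊗L*⁻¹` are iterates of `IL`/`⊗L` and of the single-step inversions `IL⁻¹`/`⊗L⁻¹`.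
These read off the premise of a final `IL`/`⊗L`, commute with `⊗R`, and η-expand `ax`. So each
respects every generator of `◦≐`, undoes its rule on the nose, and is undone by its rule up to
the η-equations `ax ◦≐ IL IR` and `ax ◦≐ ⊗L (⊗R (ax, uf ax))`.
-/

section LeftInversion

variable {V : Type}

theorem ILinv_ax : ILinv (V := V) .ax = .Ir := by
  rw [ILinv]

theorem ILinv_Il {Γ : List (Fma V)} {C : Fma V} (f : CF none Γ C) : ILinv (.Il f) = f := by
  rw [ILinv]

theorem ILinv_tr {Γ Δ : List (Fma V)} {A B : Fma V} (f : CF (some Fma.unit) Γ A)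
    (g : CF none Δ B) : ILinv (.tr f g) = .tr (ILinv f) g := by
  rw [ILinv]

theorem tensLinv_ax {A B : Fma V} : tensLinv (.ax (A := A.tens B)) = .tr .ax (.uf .ax) := by
  rw [tensLinv]

theorem tensLinv_tl {Γ : List (Fma V)} {A B C : Fma V} (f : CF (some A) (B :: Γ) C) :
    tensLinv (.tl f) = f := by
  rw [tensLinv]

theorem tensLinv_tr {Γ Δ : List (Fma V)} {A B A' B' : Fma V} (f : CF (some (A.tens B)) Γ A')
    (g : CF none Δ B') : tensLinv (.tr f g) = .tr (tensLinv f) g := by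
  rw [tensLinv]

-- Generalizing the stoup makes induction on `CFEq` possible; `cases e` discards the generators
-- at other stoups.
theorem ILinv_congr_of_eq {S : Stp V} {Γ : List (Fma V)} {C : Fma V} {f g : CF S Γ C}
    (h : CFEq f g) (e : S = some Fma.unit) :
    CFEq (ILinv (e ▸ f)) (ILinv (e ▸ g)) := by
  induction h with
  | refl => cases e; exact .refl
  | symm _ ih => exact .symm (ih e)
  | trans _ _ ih₁ ih₂ => cases e; exact .trans (ih₁ rfl) (ih₂ rfl)
  | IlCong h => cases e; rw [ILinv_Il, ILinv_Il]; exact h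
  | trCong _ h₂ ih₁ => cases e; rw [ILinv_tr, ILinv_tr]; exact .trCong (ih₁ rfl) h₂
  | axI => cases e; rw [ILinv_ax, ILinv_Il]; exact .refl
  | trIl => cases e; rw [ILinv_tr, ILinv_Il, ILinv_Il]; exact .refl
  | _ => cases e

theorem ILinv_congr {Γ : List (Fma V)} {C : Fma V} {f g : CF (some Fma.unit) Γ C}
    (h : CFEq f g) : CFEq (ILinv f) (ILinv g) :=
  ILinv_congr_of_eq h rfl

theorem tensLinv_congr_of_eq {S : Stp V} {Γ : List (Fma V)} {A B C : Fma V} {f g : CF S Γ C}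
    (h : CFEq f g) (e : S = some (A.tens B)) :
    CFEq (tensLinv (e ▸ f)) (tensLinv (e ▸ g)) := by
  induction h with
  | refl => cases e; exact .refl
  | symm _ ih => exact .symm (ih e)
  | trans _ _ ih₁ ih₂ => cases e; exact .trans (ih₁ rfl) (ih₂ rfl)
  | tlCong h => cases e; rw [tensLinv_tl, tensLinv_tl]; exact h
  | trCong _ h₂ ih₁ => cases e; rw [tensLinv_tr, tensLinv_tr]; exact .trCong (ih₁ rfl) h₂
  | axTens => cases e; rw [tensLinv_ax, tensLinv_tl]; exact .refl
  | trTl => cases e; rw [tensLinv_tr, tensLinv_tl, tensLinv_tl]; exact .refl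
  | _ => cases e

theorem tensLinv_congr {Γ : List (Fma V)} {A B C : Fma V} {f g : CF (some (A.tens B)) Γ C}
    (h : CFEq f g) : CFEq (tensLinv f) (tensLinv g) :=
  tensLinv_congr_of_eq h rfl

theorem Il_ILinv {Γ : List (Fma V)} {C : Fma V} :
    (f : CF (some Fma.unit) Γ C) → CFEq (.Il (ILinv f)) f
  | .ax => by rw [ILinv_ax]; exact .symm .axI
  | .Il f => by rw [ILinv_Il]; exact .refl
  | .tr f _ => by rw [ILinv_tr]; exact .trans (.symm .trIl) (.trCong (Il_ILinv f) .refl)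

theorem tl_tensLinv {Γ : List (Fma V)} {A B C : Fma V} :
    (f : CF (some (A.tens B)) Γ C) → CFEq (.tl (tensLinv f)) f
  | .ax => by rw [tensLinv_ax]; exact .symm .axTens
  | .tl f => by rw [tensLinv_tl]; exact .refl
  | .tr f _ => by rw [tensLinv_tr]; exact .trans (.symm .trTl) (.trCong (tl_tensLinv f) .refl)

variable {Δ : List (Fma V)} {C : Fma V}

theorem otLinvF_congr {A : Fma V} :
    (Γ : List (Fma V)) → {f g : CF (some (semF A Γ)) Δ C} → CFEq f g →
      CFEq (otLinvF Γ f) (otLinvF Γ g)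
  | [], _, _, h => h
  | _ :: Γ, _, _, h => tensLinv_congr (otLinvF_congr Γ h)

theorem otLstarF_congr {A : Fma V} :
    (Γ : List (Fma V)) → {f g : CF (some A) (Γ ++ Δ) C} → CFEq f g →
      CFEq (otLstarF Γ f) (otLstarF Γ g)
  | [], _, _, h => h
  | _ :: Γ, _, _, h => otLstarF_congr Γ (.tlCong h)

theorem otLinvF_otLstarF :
    (Γ : List (Fma V)) → {A : Fma V} → (f : CF (some A) (Γ ++ Δ) C) →
      otLinvF Γ (otLstarF Γ f) = f
  | [], _, _ => rfl
  | _ :: Γ, _, f => (congrArg tensLinv (otLinvF_otLstarF Γ (.tl f))).trans (tensLinv_tl f)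

theorem otLstarF_otLinvF :
    (Γ : List (Fma V)) → {A : Fma V} → (f : CF (some (semF A Γ)) Δ C) →
      CFEq (otLstarF Γ (otLinvF Γ f)) f
  | [], _, _ => .refl
  | _ :: Γ, _, f => .trans (otLstarF_congr Γ (tl_tensLinv _)) (otLstarF_otLinvF Γ f)

theorem otLinvstar_congr (S : Stp V) (Γ : List (Fma V)) {f g : CF (some (sem S Γ)) Δ C}
    (h : CFEq f g) : CFEq (otLinvstar S Γ f) (otLinvstar S Γ g) :=
  match S with
  | some _ => otLinvF_congr Γ h
  | none => ILinv_congr (otLinvF_congr Γ h)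

theorem otLinvstar_otLstar (S : Stp V) (Γ : List (Fma V)) (f : CF S (Γ ++ Δ) C) :
    otLinvstar S Γ (otLstar S Γ f) = f :=
  match S with
  | some _ => otLinvF_otLstarF Γ f
  | none => (congrArg ILinv (otLinvF_otLstarF Γ (.Il f))).trans (ILinv_Il f)

theorem otLstar_otLinvstar (S : Stp V) (Γ : List (Fma V)) (f : CF (some (sem S Γ)) Δ C) :
    CFEq (otLstar S Γ (otLinvstar S Γ f)) f :=
  match S with
  | some _ => otLstarF_otLinvF Γ f
  | none => .trans (otLstarF_congr Γ (Il_ILinv _)) (otLstarF_otLinvF Γ f)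

end LeftInversion

/-- The rule `⊗L*⁻¹` (witnessed by `otLinvstar`) is admissible, compatible with `◦≐`,
and inverse to the rule `⊗L*` (iterated `IL`/`⊗L`, witnessed by `otLstar`). -/
theorem statement11 (V : Type) :
    (∀ (S : Stp V) (Γ Δ : List (Fma V)) (C : Fma V) (f g : CF (some (sem S Γ)) Δ C),
      CFEq f g → CFEq (otLinvstar S Γ f) (otLinvstar S Γ g)) ∧
    (∀ (S : Stp V) (Γ Δ : List (Fma V)) (C : Fma V) (f : CF S (Γ ++ Δ) C),
      otLinvstar S Γ (otLstar S Γ f) = f) ∧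
    (∀ (S : Stp V) (Γ Δ : List (Fma V)) (C : Fma V) (f : CF (some (sem S Γ)) Δ C),
      CFEq (otLstar S Γ (otLinvstar S Γ f)) f) :=
  ⟨fun S Γ _ _ _ _ h => otLinvstar_congr S Γ h,
   fun S Γ _ _ f => otLinvstar_otLstar S Γ f,
   fun S Γ _ _ f => otLstar_otLinvstar S Γ f⟩
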